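/- arXiv:2405.19368 — 3 statements merged into one kernel-verified Lean document; each statement's English description precedes it below -/
import Mathlib

section
/- For any x > 0 and y > 0, the improper integral ∫₀¹ (-ln t)^(x-1) (-ln(1-t))^(y-1) dt converges (the integrand is integrable on (0,1)). -/
/-!
On `(0, 1/2]` one has `t ≤ -log (1 - t) ≤ 2t`, so the integrand is bounded by a constant times
`(-log t) ^ (x - 1) * t ^ (y - 1)`; the substitution `t = exp (-u)` turns the latter into
`u ^ (x - 1) * exp (-y u)`, integrable on `(0, ∞)` like the Gamma integrand. The reflection
`t ↦ 1 - t` exchanges `x` and `y`, which handles `[1/2, 1)`.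
-/

open Real Set intervalIntegral

noncomputable def biGamma (x y : ℝ) : ℝ :=
  ∫ t in (0:ℝ)..1, (-Real.log t) ^ (x - 1) * (-Real.log (1 - t)) ^ (y - 1)

open MeasureTheory

noncomputable def biGammaIntegrand (x y t : ℝ) : ℝ :=
  (-log t) ^ (x - 1) * (-log (1 - t)) ^ (y - 1)

lemma biGammaIntegrand_one_sub (x y t : ℝ) :
    biGammaIntegrand x y (1 - t) = biGammaIntegrand y x t := by
  simp only [biGammaIntegrand, sub_sub_cancel, mul_comm]

lemma measurable_biGammaIntegrand (x y : ℝ) : Measurable (biGammaIntegrand x y) := by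
  unfold biGammaIntegrand; fun_prop

lemma integrableOn_neg_log_rpow_mul_rpow {x y : ℝ} (hx : 0 < x) (hy : 0 < y) :
    IntegrableOn (fun t ↦ (-log t) ^ (x - 1) * t ^ (y - 1)) (Ioo 0 1) := by
  have hGamma : IntegrableOn (fun u ↦ u ^ (x - 1) * exp (-y * u ^ (1 : ℝ))) (Ioi (-0)) := by
    rw [neg_zero]
    exact integrableOn_rpow_mul_exp_neg_mul_rpow (s := x - 1) (by linarith) one_pos hy
  have himage : exp '' Iio 0 = Ioo 0 1 := by rw [image_exp_Iio, exp_zero]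
  rw [← himage, integrableOn_image_iff_integrableOn_abs_deriv_smul
    measurableSet_Iio (fun u _ ↦ (hasDerivAt_exp u).hasDerivWithinAt) exp_injective.injOn]
  refine hGamma.comp_neg_Iio.congr_fun (fun u _ ↦ ?_) measurableSet_Iio
  simp only [abs_of_pos (exp_pos u), log_exp, smul_eq_mul, rpow_one, ← exp_mul]
  rw [mul_left_comm, ← exp_add]
  ring_nf

lemma neg_log_one_sub_mem_Icc {t : ℝ} (ht₀ : 0 ≤ t) (ht : t ≤ 1 / 2) :
    -log (1 - t) ∈ Icc t (2 * t) := by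
  have h₁ : 0 < 1 - t := by linarith
  constructor
  · linarith [log_le_sub_one_of_pos h₁]
  · have hinv : (1 - t)⁻¹ ≤ 1 + 2 * t := by
      rw [inv_le_iff_one_le_mul₀ h₁]; nlinarith
    linarith [one_sub_inv_le_log_of_pos h₁]

lemma rpow_le_max_one_rpow_mul_rpow {a b c p : ℝ} (ha : 0 < a) (hab : a ≤ b) (hbc : b ≤ c * a) :
    b ^ p ≤ max 1 (c ^ p) * a ^ p := by
  rcases le_or_gt 0 p with hp | hp
  · have hc : 0 ≤ c := nonneg_of_mul_nonneg_left (ha.le.trans (hab.trans hbc)) ha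
    calc b ^ p ≤ (c * a) ^ p := rpow_le_rpow (ha.le.trans hab) hbc hp
      _ = c ^ p * a ^ p := mul_rpow hc ha.le
      _ ≤ max 1 (c ^ p) * a ^ p := by gcongr; exact le_max_right _ _
  · calc b ^ p ≤ a ^ p := rpow_le_rpow_of_nonpos ha hab hp.le
      _ ≤ max 1 (c ^ p) * a ^ p := le_mul_of_one_le_left (by positivity) (le_max_left _ _)

lemma integrableOn_biGammaIntegrand_Ioc_zero_half {x y : ℝ} (hx : 0 < x) (hy : 0 < y) :
    IntegrableOn (biGammaIntegrand x y) (Ioc 0 (1 / 2)) := by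
  have hdom := ((integrableOn_neg_log_rpow_mul_rpow hx hy).mono_set
    (Ioc_subset_Ioo_right (by norm_num : (1 / 2 : ℝ) < 1))).const_mul (max 1 (2 ^ (y - 1)))
  refine hdom.mono' (measurable_biGammaIntegrand x y).aestronglyMeasurable
    ((ae_restrict_iff' measurableSet_Ioc).2 (ae_of_all _ fun t ⟨ht₀, ht⟩ ↦ ?_))
  obtain ⟨hlow, hupp⟩ := neg_log_one_sub_mem_Icc ht₀.le ht
  have hlog : 0 ≤ -log t := neg_nonneg.2 (log_nonpos ht₀.le (by linarith))
  rw [biGammaIntegrand, norm_of_nonneg (mul_nonneg (rpow_nonneg hlog _)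
    (rpow_nonneg (ht₀.le.trans hlow) _)), mul_left_comm]
  gcongr
  exact rpow_le_max_one_rpow_mul_rpow ht₀ hlow hupp

lemma integrableOn_biGammaIntegrand_Ioo_half_one {x y : ℝ} (hx : 0 < x) (hy : 0 < y) :
    IntegrableOn (biGammaIntegrand x y) (Ioo (1 / 2) 1) := by
  have hreflect : biGammaIntegrand x y = biGammaIntegrand y x ∘ (fun t ↦ 1 - t) :=
    funext fun t ↦ (biGammaIntegrand_one_sub y x t).symm
  have hpre : (fun t : ℝ ↦ 1 - t) ⁻¹' Ioo 0 (1 / 2) = Ioo (1 / 2) 1 := by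
    rw [preimage_const_sub_Ioo]; norm_num
  rw [hreflect, ← hpre, (Measure.measurePreserving_sub_left volume 1).integrableOn_comp_preimage
    (MeasurableEquiv.subLeft 1).measurableEmbedding]
  exact (integrableOn_biGammaIntegrand_Ioc_zero_half hy hx).mono_set Ioo_subset_Ioc_self

theorem biGamma_integrable (x y : ℝ) (hx : 0 < x) (hy : 0 < y) :
    MeasureTheory.IntegrableOn
      (fun t : ℝ => (-Real.log t) ^ (x - 1) * (-Real.log (1 - t)) ^ (y - 1))
      (Set.Ioo 0 1) := by
  have h := (integrableOn_biGammaIntegrand_Ioc_zero_half hx hy).union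
    (integrableOn_biGammaIntegrand_Ioo_half_one hx hy)
  rwa [Ioc_union_Ioo_eq_Ioo (by norm_num) (by norm_num)] at h
end

section
/- If x ≥ 1 and y ≥ 1, then Γ(x,y) ≥ max(Γ(x)/y^x, Γ(y)/x^y). -/
open Real Set intervalIntegral

/-!
The substitution `t = exp (-u)` turns `∫₀¹ (-log t)^(x-1) t^(y-1) dt` into the Laplace-type
integral `∫₀^∞ u^(x-1) e^(-y u) du = Γ(x) / y^x`. Since `t ≤ -log (1 - t)` on `(0, 1)` and
`y ≥ 1`, the factor `t^(y-1)` is dominated by `(-log (1 - t))^(y-1)`, which gives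
`Γ(x) / y^x ≤ Γ(x, y)`; the other bound follows from the symmetry `Γ(x, y) = Γ(y, x)`.
The comparison needs the Bigamma integrand to be integrable: by `a^p b^q ≤ a^(p+q) + b^(p+q)`
it is dominated by `(-log t)^(x+y-2) + (-log (1 - t))^(x+y-2)`, integrable by the same substitution.
-/

open MeasureTheory

lemma rpow_mul_rpow_le_rpow_add_add_rpow_add {a b p q : ℝ} (ha : 0 ≤ a) (hb : 0 ≤ b)
    (hp : 0 ≤ p) (hq : 0 ≤ q) : a ^ p * b ^ q ≤ a ^ (p + q) + b ^ (p + q) := by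
  rcases le_total a b with hab | hab
  · calc a ^ p * b ^ q ≤ b ^ p * b ^ q := by gcongr
      _ = b ^ (p + q) := (rpow_add_of_nonneg hb hp hq).symm
      _ ≤ a ^ (p + q) + b ^ (p + q) := le_add_of_nonneg_left (by positivity)
  · calc a ^ p * b ^ q ≤ a ^ p * a ^ q := by gcongr
      _ = a ^ (p + q) := (rpow_add_of_nonneg ha hp hq).symm
      _ ≤ a ^ (p + q) + b ^ (p + q) := le_add_of_nonneg_right (by positivity)

lemma image_exp_neg_Ioi : (fun u : ℝ => exp (-u)) '' Ioi 0 = Ioo 0 1 := by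
  ext t
  constructor
  · rintro ⟨u, hu, rfl⟩
    exact ⟨exp_pos _, exp_lt_one_iff.mpr (neg_lt_zero.mpr hu)⟩
  · rintro ⟨h0, h1⟩
    exact ⟨-log t, neg_pos.mpr (log_neg h0 h1), by simp [exp_log h0]⟩

lemma hasDerivWithinAt_exp_neg (s : Set ℝ) (u : ℝ) :
    HasDerivWithinAt (fun u : ℝ => exp (-u)) (-exp (-u)) s u := by
  simpa using ((hasDerivAt_neg u).exp).hasDerivWithinAt

lemma injOn_exp_neg (s : Set ℝ) : InjOn (fun u : ℝ => exp (-u)) s :=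
  fun _ _ _ _ h => neg_injective (exp_injective h)

lemma intervalIntegrable_zero_one_iff_exp_neg (g : ℝ → ℝ) :
    IntervalIntegrable g volume 0 1 ↔
      IntegrableOn (fun u => exp (-u) * g (exp (-u))) (Ioi 0) := by
  rw [intervalIntegrable_iff_integrableOn_Ioo_of_le zero_le_one, ← image_exp_neg_Ioi,
    integrableOn_image_iff_integrableOn_abs_deriv_smul measurableSet_Ioi
      (fun u _ => hasDerivWithinAt_exp_neg _ u) (injOn_exp_neg _)]
  simp [abs_of_pos (exp_pos _)]

lemma integral_zero_one_eq_integral_exp_neg (g : ℝ → ℝ) :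
    ∫ t in (0:ℝ)..1, g t = ∫ u in Ioi 0, exp (-u) * g (exp (-u)) := by
  rw [integral_of_le zero_le_one, integral_Ioc_eq_integral_Ioo, ← image_exp_neg_Ioi,
    integral_image_eq_integral_abs_deriv_smul measurableSet_Ioi
      (fun u _ => hasDerivWithinAt_exp_neg _ u) (injOn_exp_neg _)]
  simp [abs_of_pos (exp_pos _)]

lemma exp_neg_mul_neg_log_rpow_mul_rpow (x y u : ℝ) :
    exp (-u) * ((-log (exp (-u))) ^ (x - 1) * exp (-u) ^ (y - 1)) =
      u ^ (x - 1) * exp (-(y * u)) := by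
  rw [log_exp, neg_neg, ← exp_mul, mul_left_comm, ← exp_add]
  ring_nf

lemma intervalIntegrable_neg_log_rpow_mul_rpow {x y : ℝ} (hx : 0 < x) (hy : 0 < y) :
    IntervalIntegrable (fun t => (-log t) ^ (x - 1) * t ^ (y - 1)) volume 0 1 := by
  rw [intervalIntegrable_zero_one_iff_exp_neg]
  simp_rw [exp_neg_mul_neg_log_rpow_mul_rpow]
  simpa [neg_mul] using
    integrableOn_rpow_mul_exp_neg_mul_rpow (by linarith : (-1:ℝ) < x - 1) one_pos hy

lemma integral_neg_log_rpow_mul_rpow {x y : ℝ} (hx : 0 < x) (hy : 0 < y) :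
    ∫ t in (0:ℝ)..1, (-log t) ^ (x - 1) * t ^ (y - 1) = Gamma x / y ^ x := by
  simp_rw [integral_zero_one_eq_integral_exp_neg, exp_neg_mul_neg_log_rpow_mul_rpow]
  rw [integral_rpow_mul_exp_neg_mul_Ioi hx hy, one_div, inv_rpow hy.le, inv_mul_eq_div]

lemma intervalIntegrable_neg_log_rpow {s : ℝ} (hs : -1 < s) :
    IntervalIntegrable (fun t => (-log t) ^ s) volume 0 1 := by
  simpa using intervalIntegrable_neg_log_rpow_mul_rpow (x := s + 1) (by linarith) one_pos

lemma intervalIntegrable_biGamma_integrand {x y : ℝ} (hx : 1 ≤ x) (hy : 1 ≤ y) :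
    IntervalIntegrable (fun t => (-log t) ^ (x - 1) * (-log (1 - t)) ^ (y - 1)) volume 0 1 := by
  have hs : -1 < x - 1 + (y - 1) := by linarith
  have hdom := (intervalIntegrable_neg_log_rpow hs).add
    (by simpa using ((intervalIntegrable_neg_log_rpow hs).comp_sub_left 1).symm)
  refine hdom.mono_fun' (by fun_prop) ?_
  rw [Filter.EventuallyLE, ae_restrict_iff' measurableSet_uIoc]
  refine .of_forall fun t ht => ?_
  rw [uIoc_of_le zero_le_one] at ht
  have ha : 0 ≤ -log t := neg_nonneg.mpr (log_nonpos ht.1.le ht.2)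
  have hb : 0 ≤ -log (1 - t) :=
    neg_nonneg.mpr (log_nonpos (by linarith [ht.2]) (by linarith [ht.1]))
  rw [Real.norm_of_nonneg (by positivity)]
  exact rpow_mul_rpow_le_rpow_add_add_rpow_add ha hb (by linarith) (by linarith)

lemma le_neg_log_one_sub {t : ℝ} (ht : t < 1) : t ≤ -log (1 - t) := by
  linarith [log_le_sub_one_of_pos (sub_pos.mpr ht)]

lemma Gamma_div_rpow_le_biGamma {x y : ℝ} (hx : 1 ≤ x) (hy : 1 ≤ y) :
    Gamma x / y ^ x ≤ biGamma x y := by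
  rw [← integral_neg_log_rpow_mul_rpow (by linarith) (by linarith), biGamma]
  refine integral_mono_on_of_le_Ioo zero_le_one
    (intervalIntegrable_neg_log_rpow_mul_rpow (by linarith) (by linarith))
    (intervalIntegrable_biGamma_integrand hx hy) fun t ht => ?_
  have ha : 0 ≤ -log t := neg_nonneg.mpr (log_nonpos ht.1.le ht.2.le)
  gcongr
  · exact ht.1.le
  · exact le_neg_log_one_sub ht.2

lemma biGamma_comm (x y : ℝ) : biGamma x y = biGamma y x := by
  have h := integral_comp_sub_left (a := 0) (b := 1)
    (fun t => (-log t) ^ (y - 1) * (-log (1 - t)) ^ (x - 1)) 1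
  simp only [sub_sub_cancel, sub_self, sub_zero] at h
  simp only [biGamma, ← h, mul_comm]

theorem biGamma_ge_max (x y : ℝ) (hx : 1 ≤ x) (hy : 1 ≤ y) :
    max (Real.Gamma x / y ^ x) (Real.Gamma y / x ^ y) ≤ biGamma x y :=
  max_le (Gamma_div_rpow_le_biGamma hx hy) (biGamma_comm x y ▸ Gamma_div_rpow_le_biGamma hy hx)
end

section
/- For any x ≥ 1 and y ≥ 1, Γ(x,y) ≥ B(x,y), where B is the Euler beta function; the inequality is reversed if 0 < x ≤ 1 and 0 < y ≤ 1. -/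
/-!
Since `-log t ≥ 1 - t` and `-log (1 - t) ≥ t` on `(0, 1)`, raising to the powers `x - 1` and
`y - 1` compares the integrand of `Γ(x, y)` pointwise with that of `B(y, x) = B(x, y)`: from above
when both exponents are nonnegative, from below when both are nonpositive. For `x, y ≥ 1` the
integrand of `Γ(x, y)` is integrable because `-log t ≤ x t^(-1/x)` dominates it by a multiple of
the integrand of `B(1/x, 1/y)`.
-/

open Real Set intervalIntegral

noncomputable def betaReal (x y : ℝ) : ℝ :=
  ∫ t in (0:ℝ)..1, t ^ (x - 1) * (1 - t) ^ (y - 1)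

open MeasureTheory

lemma ae_restrict_Ioc_mem_Ioo (a b : ℝ) : ∀ᵐ t ∂volume.restrict (Ioc a b), t ∈ Ioo a b := by
  rw [← Measure.restrict_congr_set Ioo_ae_eq_Ioc]
  exact ae_restrict_mem measurableSet_Ioo

lemma intervalIntegral.integral_mono_of_nonneg_on_Ioo {f g : ℝ → ℝ} {a b : ℝ} (hab : a ≤ b)
    (hf : ∀ t ∈ Ioo a b, 0 ≤ f t) (hg : IntervalIntegrable g volume a b)
    (hfg : ∀ t ∈ Ioo a b, f t ≤ g t) : ∫ t in a..b, f t ≤ ∫ t in a..b, g t := by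
  rw [integral_of_le hab, integral_of_le hab]
  refine integral_mono_of_nonneg ?_ ((intervalIntegrable_iff_integrableOn_Ioc_of_le hab).mp hg) ?_
  · filter_upwards [ae_restrict_Ioc_mem_Ioo a b] with t ht using hf t ht
  · filter_upwards [ae_restrict_Ioc_mem_Ioo a b] with t ht using hfg t ht

lemma IntervalIntegrable.of_nonneg_of_le_on_Ioo {f g : ℝ → ℝ} {a b : ℝ} (hab : a ≤ b)
    (hfm : AEStronglyMeasurable f (volume.restrict (Ioc a b))) (hf : ∀ t ∈ Ioo a b, 0 ≤ f t)
    (hg : IntervalIntegrable g volume a b) (hfg : ∀ t ∈ Ioo a b, f t ≤ g t) :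
    IntervalIntegrable f volume a b := by
  rw [← uIoc_of_le hab] at hfm
  refine hg.mono_fun' hfm ?_
  rw [uIoc_of_le hab]
  filter_upwards [ae_restrict_Ioc_mem_Ioo a b] with t ht
  rw [Real.norm_of_nonneg (hf t ht)]
  exact hfg t ht

lemma intervalIntegrable_rpow_mul_one_sub_rpow {x y : ℝ} (hx : 0 < x) (hy : 0 < y) :
    IntervalIntegrable (fun t : ℝ => t ^ (x - 1) * (1 - t) ^ (y - 1)) volume 0 1 := by
  refine (Complex.betaIntegral_convergent (u := x) (v := y) (by simpa) (by simpa)).norm.congr_uIoo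
    fun t ht => ?_
  rw [uIoo_of_le zero_le_one] at ht
  have h1t : 0 < 1 - t := sub_pos.mpr ht.2
  simp only [norm_mul]
  rw [show (1 : ℂ) - t = ((1 - t : ℝ) : ℂ) by push_cast; rfl,
    Complex.norm_cpow_eq_rpow_re_of_pos ht.1, Complex.norm_cpow_eq_rpow_re_of_pos h1t]
  simp

lemma betaReal_comm (x y : ℝ) : betaReal x y = betaReal y x := by
  have h := integral_comp_sub_left (a := 0) (b := 1)
    (fun t : ℝ => t ^ (y - 1) * (1 - t) ^ (x - 1)) (1 : ℝ)
  simp only [sub_sub_cancel, sub_zero, sub_self] at h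
  rw [betaReal, betaReal, ← h]
  simp only [mul_comm]

lemma one_sub_le_neg_log {t : ℝ} (ht : 0 < t) : 1 - t ≤ -log t := by
  linarith [log_le_sub_one_of_pos ht]

lemma neg_log_nonneg {t : ℝ} (ht0 : 0 ≤ t) (ht1 : t ≤ 1) : 0 ≤ -log t :=
  neg_nonneg.mpr (log_nonpos ht0 ht1)

lemma neg_log_rpow_mul_neg_log_one_sub_rpow_nonneg (x y : ℝ) {t : ℝ} (ht : t ∈ Ioo (0 : ℝ) 1) :
    0 ≤ (-log t) ^ (x - 1) * (-log (1 - t)) ^ (y - 1) :=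
  mul_nonneg (rpow_nonneg (neg_log_nonneg ht.1.le ht.2.le) _)
    (rpow_nonneg (neg_log_nonneg (by linarith [ht.2]) (by linarith [ht.1])) _)

lemma neg_log_rpow_le {x t : ℝ} (hx : 1 ≤ x) (ht0 : 0 < t) (ht1 : t ≤ 1) :
    (-log t) ^ (x - 1) ≤ x ^ (x - 1) * t ^ (x⁻¹ - 1) := by
  have hx0 : 0 < x := by linarith
  have hlog : -log t ≤ x * t ^ (-x⁻¹) := by
    have h := log_le_sub_one_of_pos (rpow_pos_of_pos ht0 (-x⁻¹))
    rw [log_rpow ht0, neg_mul, ← mul_neg, inv_mul_le_iff₀ hx0] at h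
    linarith
  calc (-log t) ^ (x - 1) ≤ (x * t ^ (-x⁻¹)) ^ (x - 1) :=
        rpow_le_rpow (neg_log_nonneg ht0.le ht1) hlog (by linarith)
    _ = x ^ (x - 1) * t ^ (x⁻¹ - 1) := by
        rw [mul_rpow hx0.le (rpow_nonneg ht0.le _), ← rpow_mul ht0.le]
        congr 2
        field_simp
        ring

lemma neg_log_rpow_mul_neg_log_one_sub_rpow_le {x y t : ℝ} (hx : 1 ≤ x) (hy : 1 ≤ y)
    (ht : t ∈ Ioo (0 : ℝ) 1) :
    (-log t) ^ (x - 1) * (-log (1 - t)) ^ (y - 1) ≤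
      x ^ (x - 1) * y ^ (y - 1) * (t ^ (x⁻¹ - 1) * (1 - t) ^ (y⁻¹ - 1)) := by
  have h1t : 0 < 1 - t := sub_pos.mpr ht.2
  calc (-log t) ^ (x - 1) * (-log (1 - t)) ^ (y - 1)
      ≤ (x ^ (x - 1) * t ^ (x⁻¹ - 1)) * (y ^ (y - 1) * (1 - t) ^ (y⁻¹ - 1)) :=
        mul_le_mul (neg_log_rpow_le hx ht.1 ht.2.le) (neg_log_rpow_le hy h1t (by linarith [ht.1]))
          (rpow_nonneg (neg_log_nonneg h1t.le (by linarith [ht.1])) _)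
          (mul_nonneg (rpow_nonneg (by linarith) _) (rpow_nonneg ht.1.le _))
    _ = _ := by ring

lemma intervalIntegrable_neg_log_rpow_mul_neg_log_one_sub_rpow {x y : ℝ} (hx : 1 ≤ x)
    (hy : 1 ≤ y) :
    IntervalIntegrable (fun t : ℝ => (-log t) ^ (x - 1) * (-log (1 - t)) ^ (y - 1)) volume 0 1 :=
  IntervalIntegrable.of_nonneg_of_le_on_Ioo zero_le_one (by fun_prop)
    (fun _ ht => neg_log_rpow_mul_neg_log_one_sub_rpow_nonneg x y ht)
    ((intervalIntegrable_rpow_mul_one_sub_rpow (by positivity) (by positivity)).const_mul _)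
    fun _ ht => neg_log_rpow_mul_neg_log_one_sub_rpow_le hx hy ht

lemma rpow_mul_one_sub_rpow_le_neg_log_rpow_mul {x y t : ℝ} (hx : 1 ≤ x) (hy : 1 ≤ y)
    (ht : t ∈ Ioo (0 : ℝ) 1) :
    t ^ (y - 1) * (1 - t) ^ (x - 1) ≤ (-log t) ^ (x - 1) * (-log (1 - t)) ^ (y - 1) := by
  have h1t : 0 < 1 - t := sub_pos.mpr ht.2
  have hlog : 1 - t ≤ -log t := one_sub_le_neg_log ht.1
  have hlog' : t ≤ -log (1 - t) := le_neg_log_one_sub ht.2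
  rw [mul_comm]
  exact mul_le_mul (rpow_le_rpow h1t.le hlog (by linarith))
    (rpow_le_rpow ht.1.le hlog' (by linarith))
    (rpow_nonneg ht.1.le _) (rpow_nonneg (h1t.le.trans hlog) _)

lemma neg_log_rpow_mul_le_rpow_mul_one_sub_rpow {x y t : ℝ} (hx : x ≤ 1) (hy : y ≤ 1)
    (ht : t ∈ Ioo (0 : ℝ) 1) :
    (-log t) ^ (x - 1) * (-log (1 - t)) ^ (y - 1) ≤ t ^ (y - 1) * (1 - t) ^ (x - 1) := by
  have h1t : 0 < 1 - t := sub_pos.mpr ht.2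
  have hlog : 1 - t ≤ -log t := one_sub_le_neg_log ht.1
  have hlog' : t ≤ -log (1 - t) := le_neg_log_one_sub ht.2
  rw [mul_comm (t ^ _)]
  exact mul_le_mul (rpow_le_rpow_of_nonpos h1t hlog (by linarith))
    (rpow_le_rpow_of_nonpos ht.1 hlog' (by linarith))
    (rpow_nonneg (ht.1.le.trans hlog') _) (rpow_nonneg h1t.le _)

theorem biGamma_vs_beta (x y : ℝ) :
    (1 ≤ x → 1 ≤ y → betaReal x y ≤ biGamma x y) ∧
    (0 < x → x ≤ 1 → 0 < y → y ≤ 1 → biGamma x y ≤ betaReal x y) := by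
  refine ⟨fun hx hy => ?_, fun hx0 hx1 hy0 hy1 => ?_⟩ <;> rw [betaReal_comm]
  · exact integral_mono_of_nonneg_on_Ioo zero_le_one
      (fun t ht => mul_nonneg (rpow_nonneg ht.1.le _) (rpow_nonneg (by linarith [ht.2]) _))
      (intervalIntegrable_neg_log_rpow_mul_neg_log_one_sub_rpow hx hy)
      fun _ ht => rpow_mul_one_sub_rpow_le_neg_log_rpow_mul hx hy ht
  · exact integral_mono_of_nonneg_on_Ioo zero_le_one
      (fun _ ht => neg_log_rpow_mul_neg_log_one_sub_rpow_nonneg x y ht)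
      (intervalIntegrable_rpow_mul_one_sub_rpow hy0 hx0)
      fun _ ht => neg_log_rpow_mul_le_rpow_mul_one_sub_rpow hx1 hy1 ht
end
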